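/- Let G be a simple, 3-edge-connected graph with gon(G) = 3, let D be an effective divisor on G with deg(D) = 3 and r(D) = 1, and for each vertex v let D_v be the unique effective divisor equivalent to D with v in its support. If e = uv ∈ E(G) is an edge with [u]_D ≠ [v]_D, then there are exactly three edges between the vertices of [u]_D and the vertices of [v]_D; moreover, for each vertex u′ ∈ [u]_D, the number of edges between u′ and [v]_D equals D_{u′}(u′). -/

import Mathlib

/-- A finite loopless multigraph: a finite vertex type, a finite edge type,
and an assignment of an unordered pair of distinct endpoints to each edge. -/
structure Multigraph where
  V : Type
  E : Type
  [fintypeV : Fintype V]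
  [fintypeE : Fintype E]
  [decEqV : DecidableEq V]
  ends : E → Sym2 V
  loopless : ∀ e, ¬ (ends e).IsDiag

attribute [instance] Multigraph.fintypeV Multigraph.fintypeE Multigraph.decEqV

namespace Multigraph

/-- The graph obtained by deleting the edges in `W` is connected (finite graphs are
connected iff the vertex set is nonempty and every nonempty proper vertex subset
has an edge leaving it). -/
def ConnectedWithout (G : Multigraph) (W : Set G.E) : Prop :=
  Nonempty G.V ∧
    ∀ A : Finset G.V, A.Nonempty → A ≠ Finset.univ →
      ∃ e, e ∉ W ∧ ∃ u v, G.ends e = s(u, v) ∧ u ∈ A ∧ v ∉ A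

/-- `G` is connected. -/
def Connected (G : Multigraph) : Prop := G.ConnectedWithout ∅

/-- `G` is `k`-edge-connected: deleting any set of at most `k - 1` edges
leaves a connected graph. -/
def EdgeConnected (G : Multigraph) (k : ℕ) : Prop :=
  ∀ W : Finset G.E, W.card < k → G.ConnectedWithout ↑W

/-- An edge is a bridge if deleting it disconnects the graph. -/
def IsBridge (G : Multigraph) (e : G.E) : Prop := ¬ G.ConnectedWithout {e}

/-- The graph obtained by deleting the vertices in `U` (and all incident edges)
is connected. -/
def ConnectedAvoiding (G : Multigraph) (U : Set G.V) : Prop :=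
  (∃ v, v ∉ U) ∧
    ∀ A : Finset G.V, A.Nonempty → (∀ a ∈ A, a ∉ U) → (∃ w, w ∉ U ∧ w ∉ A) →
      ∃ e u v, G.ends e = s(u, v) ∧ u ∈ A ∧ v ∉ A ∧ v ∉ U

/-- `G` is `k`-vertex-connected: deleting any set of at most `k - 1` vertices
leaves a connected graph. -/
def VertexConnected (G : Multigraph) (k : ℕ) : Prop :=
  ∀ U : Finset G.V, U.card < k → G.ConnectedAvoiding ↑U

/-- `G` is simple: no two distinct edges have the same pair of endpoints. -/
def Simple (G : Multigraph) : Prop :=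
  ∀ e e' : G.E, G.ends e = G.ends e' → e = e'

/-- The genus `g(G) = |E| - |V| + 1`. -/
def genus (G : Multigraph) : ℤ :=
  (Fintype.card G.E : ℤ) - (Fintype.card G.V : ℤ) + 1

/-- A tree is a connected graph of genus 0. -/
def IsTree (G : Multigraph) : Prop := G.Connected ∧ G.genus = 0

/-- The number of edges joining `u` and `v`. -/
noncomputable def numEdges (G : Multigraph) (u v : G.V) : ℕ :=
  Set.ncard {e : G.E | G.ends e = s(u, v)}

/-- The valence of a vertex: the number of incident edges. -/
noncomputable def valence (G : Multigraph) (v : G.V) : ℕ :=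
  Set.ncard {e : G.E | v ∈ G.ends e}

/-- A divisor on `G`: an element of the free abelian group on `V(G)`. -/
abbrev Divisor (G : Multigraph) : Type := G.V → ℤ

/-- The degree of a divisor: the sum of its coefficients. -/
def degree (G : Multigraph) (D : G.Divisor) : ℤ := ∑ v, D v

/-- A divisor is effective if all its coefficients are nonnegative. -/
def Effective (G : Multigraph) (D : G.Divisor) : Prop := ∀ v, 0 ≤ D v

/-- The Laplacian of `G` applied to an integer vector `f`. -/
noncomputable def laplacian (G : Multigraph) (f : G.V → ℤ) : G.Divisor :=
  fun v => ∑ w, (G.numEdges v w : ℤ) * (f v - f w)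

/-- Linear equivalence of divisors: the difference is in the image of the Laplacian. -/
def LinEquiv (G : Multigraph) (D D' : G.Divisor) : Prop :=
  ∃ f : G.V → ℤ, D - D' = G.laplacian f

/-- `D - F` is equivalent to an effective divisor for every effective `F` of degree `k`. -/
def RankGe (G : Multigraph) (D : G.Divisor) (k : ℤ) : Prop :=
  ∀ F : G.Divisor, G.Effective F → G.degree F = k →
    ∃ E' : G.Divisor, G.Effective E' ∧ G.LinEquiv (D - F) E'

/-- The Baker–Norine rank of a divisor. -/
noncomputable def rank (G : Multigraph) (D : G.Divisor) : ℤ :=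
  sSup {r : ℤ | r = -1 ∨ (0 ≤ r ∧ G.RankGe D r)}

/-- The (divisorial) gonality of `G`: the minimum degree of an effective divisor
of rank at least 1. -/
noncomputable def gonality (G : Multigraph) : ℕ :=
  sInf {n : ℕ | ∃ D : G.Divisor, G.Effective D ∧ G.degree D = (n : ℤ) ∧ 1 ≤ G.rank D}

end Multigraph

/-- A morphism of multigraphs: vertices map to vertices, and each edge maps either
to an edge joining the images of its endpoints (if they are distinct) or to the
common image of its endpoints. -/
structure Morphism (G G' : Multigraph) where
  vertexMap : G.V → G'.V
  edgeMap : G.E → G'.E ⊕ G'.V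
  map_edge_of_eq : ∀ e u v, G.ends e = s(u, v) → vertexMap u = vertexMap v →
    edgeMap e = Sum.inr (vertexMap u)
  map_edge_of_ne : ∀ e u v, G.ends e = s(u, v) → vertexMap u ≠ vertexMap v →
    ∃ e', edgeMap e = Sum.inl e' ∧ G'.ends e' = s(vertexMap u, vertexMap v)

namespace Morphism

variable {G G' : Multigraph}

/-- The multiplicity `m_φ(v)` of `φ` at `v` with respect to an edge `e'` of `G'`. -/
noncomputable def mult (φ : Morphism G G') (v : G.V) (e' : G'.E) : ℕ :=
  Set.ncard {e : G.E | v ∈ G.ends e ∧ φ.edgeMap e = Sum.inl e'}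

/-- `φ` is harmonic if `m_φ(v)` does not depend on the chosen edge `e'`
incident to `φ(v)`. -/
def Harmonic (φ : Morphism G G') : Prop :=
  ∀ (v : G.V) (e₁ e₂ : G'.E),
    φ.vertexMap v ∈ G'.ends e₁ → φ.vertexMap v ∈ G'.ends e₂ →
      φ.mult v e₁ = φ.mult v e₂

/-- `φ` is non-degenerate if `m_φ(v) > 0` for every vertex `v`. -/
def Nondegenerate (φ : Morphism G G') : Prop :=
  ∀ (v : G.V) (e' : G'.E), φ.vertexMap v ∈ G'.ends e' → 0 < φ.mult v e'

/-- `φ` has degree `d`: every edge of `G'` has exactly `d` preimages. -/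
def HasDegree (φ : Morphism G G') (d : ℕ) : Prop :=
  Nonempty G'.E ∧ ∀ e' : G'.E, Set.ncard {e : G.E | φ.edgeMap e = Sum.inl e'} = d

end Morphism

/-! Write `D_u - D_v = Δf` and let `A` be the set where `f` is maximal. Under `Δf` every
vertex of `A` loses at least one chip per edge leaving `A`, so by 3-edge-connectivity
`3 ≤ #cut(A) ≤ ∑_A (D_u - D_v) ≤ deg D_u = 3`. Equality throughout forces `D_u` to put on each
vertex of `A` exactly one chip per edge leaving `A`, and `D_v` to vanish on `A`. Firing `A` then
pushes all these chips across the cut, and by uniqueness the result is `D_v`, which therefore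
puts on each vertex outside `A` one chip per edge into `A`. Both counts are read off these two
explicit divisors. -/

namespace Multigraph

variable {G : Multigraph}

lemma numEdges_comm (a b : G.V) : G.numEdges a b = G.numEdges b a := by
  rw [numEdges, numEdges, Sym2.eq_swap]

lemma numEdges_pos {e : G.E} {a b : G.V} (h : G.ends e = s(a, b)) : 0 < G.numEdges a b :=
  (Set.ncard_pos (Set.toFinite _)).mpr ⟨e, h⟩

noncomputable def numEdgesTo (x : G.V) (B : Finset G.V) : ℕ := ∑ b ∈ B, G.numEdges x b

lemma numEdgesTo_pos {e : G.E} {a b : G.V} {B : Finset G.V} (h : G.ends e = s(a, b))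
    (hb : b ∈ B) : 0 < G.numEdgesTo a B :=
  (numEdges_pos h).trans_le (Finset.single_le_sum (fun _ _ => Nat.zero_le _) hb)

lemma ncard_edges_to (x : G.V) (B : Finset G.V) :
    {e | ∃ b ∈ B, G.ends e = s(x, b)}.ncard = G.numEdgesTo x B := by
  have hunion : {e | ∃ b ∈ B, G.ends e = s(x, b)} =
      ⋃ b ∈ (B : Set G.V), {e | G.ends e = s(x, b)} := by
    ext; simp
  rw [hunion, Set.Finite.ncard_biUnion B.finite_toSet (fun _ _ => Set.toFinite _),
    finsum_mem_coe_finset, numEdgesTo]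
  · rfl
  · intro b _ b' _ hbb'
    refine Set.disjoint_left.mpr fun e (he : _ = _) (he' : _ = _) => hbb' ?_
    exact Sym2.congr_right.mp (he.symm.trans he')

lemma ncard_edges_between (A B : Finset G.V) (hAB : Disjoint A B) :
    {e | ∃ a ∈ A, ∃ b ∈ B, G.ends e = s(a, b)}.ncard = ∑ a ∈ A, G.numEdgesTo a B := by
  have hunion : {e | ∃ a ∈ A, ∃ b ∈ B, G.ends e = s(a, b)} =
      ⋃ a ∈ (A : Set G.V), {e | ∃ b ∈ B, G.ends e = s(a, b)} := by
    ext; simp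
  rw [hunion, Set.Finite.ncard_biUnion A.finite_toSet (fun _ _ => Set.toFinite _),
    finsum_mem_coe_finset]
  · exact Finset.sum_congr rfl fun a _ => ncard_edges_to a B
  · intro a ha a' ha' haa'
    refine Set.disjoint_left.mpr fun e ⟨b, hb, he⟩ ⟨b', hb', he'⟩ => ?_
    rcases Sym2.eq_iff.mp (he.symm.trans he') with ⟨h, -⟩ | ⟨h, -⟩
    · exact haa' h
    · exact Finset.disjoint_left.mp hAB ha (h ▸ hb')

lemma EdgeConnected.le_ncard_cut {k : ℕ} (hk : G.EdgeConnected k) {A : Finset G.V}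
    (hne : A.Nonempty) (huniv : A ≠ Finset.univ) :
    k ≤ {e | ∃ a ∈ A, ∃ b ∈ Aᶜ, G.ends e = s(a, b)}.ncard := by
  classical
  by_contra! hlt
  set cut := {e | ∃ a ∈ A, ∃ b ∈ Aᶜ, G.ends e = s(a, b)}
  obtain ⟨e, he, a, b, hab, ha, hb⟩ :=
    (hk cut.toFinset (by rwa [← Set.ncard_eq_toFinset_card'])).2 A hne huniv
  exact he (Set.mem_toFinset.mpr ⟨a, ha, b, Finset.mem_compl.mpr hb, hab⟩)

lemma laplacian_add (f g : G.V → ℤ) : G.laplacian (f + g) = G.laplacian f + G.laplacian g := by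
  funext x
  simp only [laplacian, Pi.add_apply, ← Finset.sum_add_distrib]
  exact Finset.sum_congr rfl fun _ _ => by ring

lemma laplacian_neg (f : G.V → ℤ) : G.laplacian (-f) = -G.laplacian f := by
  funext x
  simp only [laplacian, Pi.neg_apply, ← Finset.sum_neg_distrib]
  exact Finset.sum_congr rfl fun _ _ => by ring

lemma degree_laplacian (f : G.V → ℤ) : G.degree (G.laplacian f) = 0 := by
  have hswap :
      ∑ v, ∑ w, (G.numEdges v w : ℤ) * f w = ∑ v, ∑ w, (G.numEdges v w : ℤ) * f v := by
    rw [Finset.sum_comm]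
    simp only [numEdges_comm]
  simp only [degree, laplacian, mul_sub, Finset.sum_sub_distrib, hswap, sub_self]

lemma LinEquiv.symm {D D' : G.Divisor} (h : G.LinEquiv D D') : G.LinEquiv D' D := by
  obtain ⟨f, hf⟩ := h
  exact ⟨-f, by rw [laplacian_neg, ← hf, neg_sub]⟩

lemma LinEquiv.trans {D D' D'' : G.Divisor} (h : G.LinEquiv D D') (h' : G.LinEquiv D' D'') :
    G.LinEquiv D D'' := by
  obtain ⟨f, hf⟩ := h
  obtain ⟨f', hf'⟩ := h'
  exact ⟨f + f', by rw [laplacian_add, ← hf, ← hf', sub_add_sub_cancel]⟩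

lemma LinEquiv.degree_eq {D D' : G.Divisor} (h : G.LinEquiv D D') :
    G.degree D = G.degree D' := by
  obtain ⟨f, hf⟩ := h
  have := degree_laplacian (G := G) f
  rw [← hf, degree] at this
  simp only [Pi.sub_apply, Finset.sum_sub_distrib] at this
  exact sub_eq_zero.mp this

def maxSet {α : Type*} [Fintype α] (f : α → ℤ) : Finset α :=
  Finset.univ.filter fun x => ∀ y, f y ≤ f x

lemma mem_maxSet {α : Type*} [Fintype α] {f : α → ℤ} {x : α} :
    x ∈ maxSet f ↔ ∀ y, f y ≤ f x := by
  simp [maxSet]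

lemma maxSet_nonempty {α : Type*} [Fintype α] [Nonempty α] (f : α → ℤ) :
    (maxSet f).Nonempty := by
  obtain ⟨x, -, hx⟩ := Finset.exists_max_image Finset.univ f Finset.univ_nonempty
  exact ⟨x, mem_maxSet.mpr fun y => hx y (Finset.mem_univ y)⟩

lemma maxSet_ne_univ {f : G.V → ℤ} (hf : G.laplacian f ≠ 0) : maxSet f ≠ Finset.univ := by
  intro huniv
  have hconst : ∀ x y, f x = f y := fun x y =>
    le_antisymm (mem_maxSet.mp (huniv ▸ Finset.mem_univ y) x)
      (mem_maxSet.mp (huniv ▸ Finset.mem_univ x) y)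
  exact hf (funext fun x =>
    Finset.sum_eq_zero fun w _ => by rw [hconst x w, sub_self, mul_zero])

lemma numEdgesTo_compl_maxSet_le_laplacian {f : G.V → ℤ} {x : G.V} (hx : x ∈ maxSet f) :
    (G.numEdgesTo x (maxSet f)ᶜ : ℤ) ≤ G.laplacian f x := by
  have hdrop : ∀ w ∈ (maxSet f)ᶜ, 1 ≤ f x - f w := fun w hw => by
    obtain ⟨y, hy⟩ : ∃ y, f w < f y := by
      simpa [mem_maxSet] using Finset.mem_compl.mp hw
    linarith [mem_maxSet.mp hx y]
  calc (G.numEdgesTo x (maxSet f)ᶜ : ℤ)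
      = ∑ w ∈ (maxSet f)ᶜ, (G.numEdges x w : ℤ) * 1 := by simp [numEdgesTo]
    _ ≤ ∑ w ∈ (maxSet f)ᶜ, (G.numEdges x w : ℤ) * (f x - f w) :=
        Finset.sum_le_sum fun w hw => mul_le_mul_of_nonneg_left (hdrop w hw) (by positivity)
    _ ≤ G.laplacian f x :=
        Finset.sum_le_univ_sum_of_nonneg fun w =>
          mul_nonneg (by positivity) (sub_nonneg.mpr (mem_maxSet.mp hx w))

noncomputable def cutDivisor (A : Finset G.V) : G.Divisor :=
  fun x => if x ∈ A then G.numEdgesTo x Aᶜ else 0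

lemma cutDivisor_effective (A : Finset G.V) : G.Effective (cutDivisor A) := fun x => by
  unfold cutDivisor
  split_ifs <;> positivity

lemma mem_of_cutDivisor_pos {A : Finset G.V} {x : G.V} (h : 0 < cutDivisor A x) : x ∈ A := by
  by_contra hx
  simp [cutDivisor, hx] at h

lemma cutDivisor_pos {A : Finset G.V} {e : G.E} {a b : G.V} (h : G.ends e = s(a, b))
    (ha : a ∈ A) (hb : b ∉ A) : 0 < cutDivisor A a := by
  simpa [cutDivisor, ha] using numEdgesTo_pos h (Finset.mem_compl.mpr hb)

lemma degree_cutDivisor (A : Finset G.V) :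
    G.degree (cutDivisor A) = ∑ a ∈ A, (G.numEdgesTo a Aᶜ : ℤ) := by
  simp [degree, cutDivisor, Finset.sum_ite_mem]

lemma cutDivisor_sub_cutDivisor_compl (A : Finset G.V) :
    cutDivisor A - cutDivisor Aᶜ = G.laplacian fun y => if y ∈ A then 1 else 0 := by
  funext x
  by_cases hx : x ∈ A
  · simp [cutDivisor, laplacian, numEdgesTo, hx, apply_ite]
    rw [Finset.sum_ite, Finset.sum_const_zero, zero_add]
    exact Finset.sum_congr (by ext; simp) fun _ _ => rfl
  · simp [cutDivisor, laplacian, numEdgesTo, hx, apply_ite]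

lemma ncard_edges_cutDivisor_pos (A : Finset G.V) :
    ({e | ∃ a b, G.ends e = s(a, b) ∧ 0 < cutDivisor A a ∧ 0 < cutDivisor Aᶜ b}.ncard : ℤ) =
      G.degree (cutDivisor A) := by
  have hcut : {e | ∃ a b, G.ends e = s(a, b) ∧ 0 < cutDivisor A a ∧ 0 < cutDivisor Aᶜ b} =
      {e | ∃ a ∈ A, ∃ b ∈ Aᶜ, G.ends e = s(a, b)} := by
    ext e
    constructor
    · rintro ⟨a, b, hab, ha, hb⟩
      exact ⟨a, mem_of_cutDivisor_pos ha, b, mem_of_cutDivisor_pos hb, hab⟩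
    · rintro ⟨a, ha, b, hb, hab⟩
      refine ⟨a, b, hab, cutDivisor_pos hab ha (Finset.mem_compl.mp hb), ?_⟩
      exact cutDivisor_pos (hab.trans Sym2.eq_swap) hb (by simpa using ha)
  rw [hcut, ncard_edges_between A Aᶜ disjoint_compl_right, degree_cutDivisor]
  push_cast
  rfl

lemma ncard_edges_cutDivisor_compl_pos {A : Finset G.V} {x : G.V} (hx : x ∈ A) :
    ({e | ∃ b, G.ends e = s(x, b) ∧ 0 < cutDivisor Aᶜ b}.ncard : ℤ) = cutDivisor A x := by
  have hedges : {e | ∃ b, G.ends e = s(x, b) ∧ 0 < cutDivisor Aᶜ b} =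
      {e | ∃ b ∈ Aᶜ, G.ends e = s(x, b)} := by
    ext e
    constructor
    · rintro ⟨b, hxb, hb⟩
      exact ⟨b, mem_of_cutDivisor_pos hb, hxb⟩
    · rintro ⟨b, hb, hxb⟩
      exact ⟨b, hxb, cutDivisor_pos (hxb.trans Sym2.eq_swap) hb (by simpa using hx)⟩
  rw [hedges, ncard_edges_to]
  simp [cutDivisor, hx]

theorem eq_cutDivisor_maxSet {k : ℕ} (hk : G.EdgeConnected k) {D D' : G.Divisor}
    (hD : G.Effective D) (hD' : G.Effective D') (hdeg : G.degree D = k) {f : G.V → ℤ}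
    (hf : D - D' = G.laplacian f) (huniv : maxSet f ≠ Finset.univ) :
    D = cutDivisor (maxSet f) ∧ ∀ x ∈ maxSet f, D' x = 0 := by
  set A := maxSet f
  have hne : A.Nonempty := by
    obtain ⟨x, -⟩ : ∃ x, x ∉ A := by simpa [Finset.eq_univ_iff_forall] using huniv
    have : Nonempty G.V := ⟨x⟩
    exact maxSet_nonempty f
  have hout : ∀ x ∈ A, (G.numEdgesTo x Aᶜ : ℤ) ≤ D x - D' x := fun x hx => by
    rw [← Pi.sub_apply, hf]
    exact numEdgesTo_compl_maxSet_le_laplacian hx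
  have hdrop : ∀ x ∈ A, D x - D' x ≤ D x := fun x _ => by linarith [hD' x]
  -- The edge cut of `A` forces `k ≤ ∑_A (D - D') ≤ ∑_A D ≤ deg D = k`.
  have hcut : (k : ℤ) ≤ ∑ x ∈ A, (G.numEdgesTo x Aᶜ : ℤ) := by
    have := hk.le_ncard_cut hne huniv
    rw [ncard_edges_between A Aᶜ disjoint_compl_right] at this
    exact_mod_cast this
  have hsumA : ∑ x ∈ A, D x ≤ k :=
    hdeg ▸ Finset.sum_le_univ_sum_of_nonneg fun x => hD x
  have hsum_out := le_antisymm (Finset.sum_le_sum hout)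
    (by linarith [Finset.sum_le_sum hdrop, hcut] : ∑ x ∈ A, (D x - D' x) ≤ _)
  have hsum_drop := le_antisymm (Finset.sum_le_sum hdrop)
    (by linarith [Finset.sum_le_sum hout, hcut] : ∑ x ∈ A, D x ≤ _)
  have hD_out := (Finset.sum_eq_sum_iff_of_le hout).mp hsum_out
  have hD'_zero : ∀ x ∈ A, D' x = 0 := fun x hx => by
    linarith [(Finset.sum_eq_sum_iff_of_le hdrop).mp hsum_drop x hx]
  have hD_compl : ∀ x ∈ Aᶜ, D x = 0 := by
    refine (Finset.sum_eq_zero_iff_of_nonneg fun x _ => hD x).mp ?_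
    have := Finset.sum_add_sum_compl A D
    rw [show ∑ x, D x = k from hdeg] at this
    linarith [Finset.sum_le_sum hout, Finset.sum_le_sum hdrop]
  refine ⟨funext fun x => ?_, hD'_zero⟩
  by_cases hx : x ∈ A
  · simp [cutDivisor, hx, hD_out x hx, hD'_zero x hx]
  · simp [cutDivisor, hx, hD_compl x (Finset.mem_compl.mpr hx)]

end Multigraph

open Multigraph

theorem stmt_3_general (G : Multigraph) (h3 : G.EdgeConnected 3)
    (D : G.Divisor) (hdeg : G.degree D = 3)
    (Dv : G.V → G.Divisor)
    (hDv : ∀ v : G.V, G.Effective (Dv v) ∧ G.LinEquiv D (Dv v) ∧ 0 < Dv v v)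
    (hDvUnique : ∀ (v : G.V) (D' : G.Divisor),
      G.Effective D' → G.LinEquiv D D' → 0 < D' v → D' = Dv v)
    (e : G.E) (u v : G.V) (he : G.ends e = s(u, v))
    (hne : {w : G.V | 0 < Dv u w} ≠ {w : G.V | 0 < Dv v w}) :
    Set.ncard {e' : G.E | ∃ a b, G.ends e' = s(a, b) ∧ 0 < Dv u a ∧ 0 < Dv v b} = 3 ∧
      ∀ u' : G.V, 0 < Dv u u' →
        (Set.ncard {e' : G.E | ∃ b, G.ends e' = s(u', b) ∧ 0 < Dv v b} : ℤ)
          = Dv u' u' := by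
  obtain ⟨hDu_eff, hDu, hDu_pos⟩ := hDv u
  obtain ⟨hDv_eff, hDv, hDv_pos⟩ := hDv v
  obtain ⟨f, hf⟩ := hDu.symm.trans hDv
  have huniv : maxSet f ≠ Finset.univ :=
    maxSet_ne_univ fun h => hne (by rw [sub_eq_zero.mp (hf.trans h)])
  set A := maxSet f
  obtain ⟨hDuA, hDvA⟩ := eq_cutDivisor_maxSet h3 hDu_eff hDv_eff
    (by rw [← hDu.degree_eq, hdeg]; rfl) hf huniv
  have huA : u ∈ A := mem_of_cutDivisor_pos (hDuA ▸ hDu_pos)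
  have hvA : v ∉ A := fun hv => (hDvA v hv ▸ hDv_pos).false
  have hDvA' : cutDivisor Aᶜ = Dv v :=
    hDvUnique v _ (cutDivisor_effective Aᶜ)
      (hDu.trans (hDuA ▸ ⟨_, cutDivisor_sub_cutDivisor_compl A⟩))
      (cutDivisor_pos (he.trans Sym2.eq_swap) (Finset.mem_compl.mpr hvA)
        (by simpa using huA))
  rw [← hDvA', hDuA]
  have hdegA : G.degree (cutDivisor A) = 3 := hDuA ▸ hDu.symm.degree_eq.trans hdeg
  refine ⟨by exact_mod_cast (ncard_edges_cutDivisor_pos A).trans hdegA, fun u' hu' => ?_⟩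
  rw [ncard_edges_cutDivisor_compl_pos (mem_of_cutDivisor_pos hu'),
    ← hDvUnique u' _ (cutDivisor_effective A) (hDuA ▸ hDu) hu']

/-- Let `G` be simple, 3-edge-connected with `gon(G) = 3`, let `D` be
effective of degree 3 and rank 1, and for each vertex `v` let `Dv v` be the unique
effective divisor equivalent to `D` with `v` in its support (so the class `[v]_D` is
the support `{w | 0 < Dv v w}` of `Dv v`). If `e = uv` is an edge with `[u]_D ≠ [v]_D`,
then there are exactly three edges between `[u]_D` and `[v]_D`, and for each
`u' ∈ [u]_D` the number of edges between `u'` and `[v]_D` equals `D_{u'}(u')`. -/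
theorem stmt_3 (G : Multigraph) (hG : G.Connected) (hs : G.Simple)
    (h3 : G.EdgeConnected 3) (hgon : G.gonality = 3)
    (D : G.Divisor) (hD : G.Effective D) (hdeg : G.degree D = 3) (hrank : G.rank D = 1)
    (Dv : G.V → G.Divisor)
    (hDv : ∀ v : G.V, G.Effective (Dv v) ∧ G.LinEquiv D (Dv v) ∧ 0 < Dv v v)
    (hDvUnique : ∀ (v : G.V) (D' : G.Divisor),
      G.Effective D' → G.LinEquiv D D' → 0 < D' v → D' = Dv v)
    (e : G.E) (u v : G.V) (he : G.ends e = s(u, v))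
    (hne : {w : G.V | 0 < Dv u w} ≠ {w : G.V | 0 < Dv v w}) :
    Set.ncard {e' : G.E | ∃ a b, G.ends e' = s(a, b) ∧ 0 < Dv u a ∧ 0 < Dv v b} = 3 ∧
      ∀ u' : G.V, 0 < Dv u u' →
        (Set.ncard {e' : G.E | ∃ b, G.ends e' = s(u', b) ∧ 0 < Dv v b} : ℤ)
          = Dv u' u' :=
  stmt_3_general G h3 D hdeg Dv hDv hDvUnique e u v he hne
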